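/- Suppose λ₁ > 0, λ₃ < 0, and δ = τv² − κ > 0. Then u(t,x) = sqrt(−2λ₁/λ₃)·sech(sqrt(λ₁/δ)·(x+vt)) satisfies τ·u_tt − κ·u_xx = λ₁u + λ₃u³. -/

import Mathlib

/-! The function `u` is a travelling wave `f (x + v t)`, so the equation reduces to the ODE
`δ f'' = λ₁ f + λ₃ f³` with `δ = τ v² - κ`. For `f z = A sech (k z)` the identity
`sech'' = sech - 2 sech³` gives `δ f'' = δ k² f - (2 δ k² / A²) f³`, and the amplitude `A` and
the width `k` are chosen exactly so that `δ k² = λ₁` and `λ₃ A² = -2 λ₁`. -/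

noncomputable def pdt (u : ℝ → ℝ → ℝ) (t x : ℝ) : ℝ := deriv (fun s => u s x) t
noncomputable def pdx (u : ℝ → ℝ → ℝ) (t x : ℝ) : ℝ := deriv (fun y => u t y) x
noncomputable def pdtt (u : ℝ → ℝ → ℝ) (t x : ℝ) : ℝ := deriv (fun s => pdt u s x) t
noncomputable def pdxx (u : ℝ → ℝ → ℝ) (t x : ℝ) : ℝ := deriv (fun y => pdx u t y) x

open Real

-- No differentiability is needed: `deriv` commutes with affine changes of variable and with
-- constant factors unconditionally.
lemma deriv_comp_const_add_mul (g : ℝ → ℝ) (a b t : ℝ) :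
    deriv (fun s => g (a + b * s)) t = b * deriv g (a + b * t) :=
  (deriv_comp_mul_left b (fun y => g (a + y)) t).trans <| by rw [deriv_comp_const_add, smul_eq_mul]

section TravelingWave

variable (f : ℝ → ℝ) (v t x : ℝ)

lemma pdtt_travelingWave :
    pdtt (fun t x => f (x + v * t)) t x = v ^ 2 * deriv (deriv f) (x + v * t) := by
  simp only [pdtt, pdt, deriv_comp_const_add_mul, deriv_const_mul_field]
  ring

lemma pdxx_travelingWave :
    pdxx (fun t x => f (x + v * t)) t x = deriv (deriv f) (x + v * t) := by
  simp only [pdxx, pdx, deriv_comp_add_const]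

end TravelingWave

lemma deriv_deriv_const_mul_comp_mul (g : ℝ → ℝ) (A k y : ℝ) :
    deriv (deriv fun z => A * g (k * z)) y = A * k ^ 2 * deriv (deriv g) (k * y) := by
  have hderiv (c : ℝ) (h : ℝ → ℝ) :
      deriv (fun z => c * h (k * z)) = fun z => c * k * deriv h (k * z) := by
    funext z
    rw [deriv_const_mul_field, deriv_comp_mul_left (f := h), smul_eq_mul, mul_assoc]
  rw [hderiv, hderiv]
  ring

lemma deriv_inv_cosh : deriv (fun z => (cosh z)⁻¹) = fun y => -sinh y / cosh y ^ 2 :=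
  funext fun y => ((hasDerivAt_cosh y).inv (cosh_pos y).ne').deriv

lemma deriv_deriv_inv_cosh (y : ℝ) :
    deriv (deriv fun z => (cosh z)⁻¹) y = (cosh y)⁻¹ - 2 * (cosh y)⁻¹ ^ 3 := by
  have hc := (cosh_pos y).ne'
  have h : HasDerivAt (fun z => -sinh z / cosh z ^ 2)
      ((-cosh y * cosh y ^ 2 - -sinh y * (2 * cosh y ^ 1 * sinh y)) / (cosh y ^ 2) ^ 2) y :=
    (hasDerivAt_sinh y).neg.div ((hasDerivAt_cosh y).pow 2) (by positivity)
  rw [deriv_inv_cosh, h.deriv]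
  field_simp
  linear_combination 2 * sinh_sq y

theorem stmt_5 (τ κ lam1 lam3 v δ : ℝ)
    (hlam1 : lam1 > 0) (hlam3 : lam3 < 0) (hδ : δ = τ * v ^ 2 - κ) (hδpos : δ > 0)
    (u : ℝ → ℝ → ℝ)
    (hu : ∀ t x, u t x =
      Real.sqrt (-2 * lam1 / lam3) * (1 / Real.cosh (Real.sqrt (lam1 / δ) * (x + v * t)))) :
    ∀ t x, τ * pdtt u t x - κ * pdxx u t x = lam1 * u t x + lam3 * u t x ^ 3 := by
  set A := √(-2 * lam1 / lam3)
  set k := √(lam1 / δ)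
  have hA : A ^ 2 * lam3 = -2 * lam1 := by
    rw [sq_sqrt (div_nonneg_of_nonpos (by linarith) hlam3.le)]
    field_simp [hlam3.ne]
  have hk : δ * k ^ 2 = lam1 := by
    rw [sq_sqrt (div_pos hlam1 hδpos).le]
    field_simp
  set f : ℝ → ℝ := fun z => A * (cosh (k * z))⁻¹ with hf
  have hu' : u = fun t x => f (x + v * t) := by
    funext t x
    rw [hu, hf, one_div]
  intro t x
  rw [hu', pdtt_travelingWave, pdxx_travelingWave, hf,
    deriv_deriv_const_mul_comp_mul (fun z => (cosh z)⁻¹), deriv_deriv_inv_cosh]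
  dsimp only
  generalize (cosh (k * (x + v * t)))⁻¹ = s
  linear_combination (A * s * (1 - 2 * s ^ 2)) * hk - (A * s ^ 3) * hA -
    (A * k ^ 2 * (s - 2 * s ^ 3)) * hδ
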